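/- arXiv:2307.05962 — 3 statements merged into one kernel-verified Lean document; each statement's English description precedes it below -/
import Mathlib

section
/- For every s ∈ ℝ and every continuous function g : ℝ → ℝ, the function t ↦ log|t − s| · g(t) is (interval) integrable on [−1, 1]. -/
open Real

lemma intervalIntegrable_log_zero_right {c : ℝ} (hc : 0 ≤ c) :
    IntervalIntegrable Real.log MeasureTheory.volume 0 c := by
  have hdom : IntervalIntegrable (fun x : ℝ => 2 * x ^ (-(1/2) : ℝ) + |Real.log c|)
      MeasureTheory.volume 0 c :=
    ((intervalIntegral.intervalIntegrable_rpow' (by norm_num : (-1:ℝ) < -(1/2))).const_mul 2).add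
      intervalIntegrable_const
  apply hdom.mono_fun' Real.measurable_log.aestronglyMeasurable
  filter_upwards [MeasureTheory.ae_restrict_mem measurableSet_uIoc] with x hx
  rw [Set.uIoc_of_le hc] at hx
  obtain ⟨hx0, hxc⟩ := hx
  have hhalf : Real.log (x ^ (-(1/2) : ℝ)) ≤ x ^ (-(1/2) : ℝ) :=
    le_trans (Real.log_le_sub_one_of_pos (Real.rpow_pos_of_pos hx0 _)) (by linarith)
  rw [Real.log_rpow hx0] at hhalf
  have h2 : -Real.log x ≤ 2 * x ^ (-(1/2) : ℝ) := by linarith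
  have h3 : Real.log x ≤ |Real.log c| := by
    rcases le_total x 1 with h1 | h1
    · exact le_trans (Real.log_nonpos hx0.le h1) (abs_nonneg _)
    · exact le_trans (Real.log_le_log hx0 hxc) (le_abs_self _)
  have hrpos : (0:ℝ) ≤ x ^ (-(1/2) : ℝ) := (Real.rpow_pos_of_pos hx0 _).le
  rw [Real.norm_eq_abs, abs_le]
  constructor <;> nlinarith [abs_nonneg (Real.log c)]

lemma intervalIntegrable_log' (a b : ℝ) :
    IntervalIntegrable Real.log MeasureTheory.volume a b := by
  have key : ∀ c : ℝ, IntervalIntegrable Real.log MeasureTheory.volume 0 c := by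
    intro c
    rcases le_total 0 c with hc | hc
    · exact intervalIntegrable_log_zero_right hc
    · rw [IntervalIntegrable.iff_comp_neg, neg_zero]
      have := intervalIntegrable_log_zero_right (by linarith : (0:ℝ) ≤ -c)
      simpa [Real.log_neg_eq_log] using this
  exact (key a).symm.trans (key b)

/-- The weakly singular logarithmic kernel times a continuous density is
interval integrable on `[-1, 1]`. -/
theorem intervalIntegrable_log_kernel (s : ℝ) (g : ℝ → ℝ) (hg : Continuous g) :
    IntervalIntegrable (fun t => Real.log |t - s| * g t)
      MeasureTheory.volume (-1) 1 := by
  have h1 : IntervalIntegrable (fun t : ℝ => Real.log (t - s))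
      MeasureTheory.volume (-1) 1 := by
    have := (intervalIntegrable_log' (-1 - s) (1 - s)).comp_sub_right s
    simpa using this
  have h2 : IntervalIntegrable (fun t : ℝ => Real.log |t - s|)
      MeasureTheory.volume (-1) 1 := by
    simpa [Real.log_abs] using h1
  exact h2.mul_continuousOn hg.continuousOn
end

section
/- For every continuous function g : ℝ → ℝ, the map s ↦ ∫_{−1}^{1} log|t − s| · g(t) dt is continuous on ℝ (in particular at every s ∈ [−1, 1], where the integrand is singular). -/
/-!
The kernel `log |u|` is an `L¹`-limit of the continuous kernels `log (max |u| ε)`: they differ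
only on `[-ε, ε]`, where the `L¹` distance is exactly `2ε`. If a kernel `f` is within `δ` in `L¹`
of a continuous kernel `φ`, then `∫_a^b f (t - s) g t dt` and `∫_a^b φ (t - s) g t dt` differ by at
most `δ · sup |g|`, uniformly in `s`, by translation invariance of Lebesgue measure. Hence the
integral is a uniform limit of continuous functions of `s`.
-/

open Real MeasureTheory Set Filter intervalIntegral
open scoped Interval

section TranslatedKernel

variable {a b : ℝ} {g : ℝ → ℝ}

theorem abs_intervalIntegral_comp_sub_mul_le {h : ℝ → ℝ} {M : ℝ} (hh : Integrable h)
    (hM : ∀ t ∈ uIcc a b, |g t| ≤ M) (s : ℝ) :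
    |∫ t in a..b, h (t - s) * g t| ≤ M * ∫ u, |h u| := by
  have hM0 : 0 ≤ M := (abs_nonneg _).trans (hM a left_mem_uIcc)
  have hhs : Integrable fun t => M * |h (t - s)| := (hh.comp_sub_right s).abs.const_mul M
  calc |∫ t in a..b, h (t - s) * g t| = ‖∫ t in Ι a b, h (t - s) * g t‖ := by
        rw [← Real.norm_eq_abs, norm_integral_eq_norm_integral_uIoc]
    _ ≤ ∫ t in Ι a b, M * |h (t - s)| := by
        refine norm_integral_le_of_norm_le hhs.integrableOn ?_
        filter_upwards [ae_restrict_mem measurableSet_uIoc] with t ht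
        rw [norm_mul, Real.norm_eq_abs, Real.norm_eq_abs, mul_comm]
        exact mul_le_mul_of_nonneg_right (hM t (uIoc_subset_uIcc ht)) (abs_nonneg _)
    _ ≤ ∫ t, M * |h (t - s)| :=
        setIntegral_le_integral hhs (Eventually.of_forall fun t => by positivity)
    _ = M * ∫ u, |h u| := by
        rw [MeasureTheory.integral_const_mul, integral_sub_right_eq_self (fun u => |h u|) s]

theorem continuous_intervalIntegral_comp_sub_mul {f : ℝ → ℝ} (hg : Continuous g)
    (hf : ∀ δ > 0, ∃ φ : ℝ → ℝ, Continuous φ ∧ Integrable (fun u => f u - φ u) ∧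
      ∫ u, |f u - φ u| ≤ δ) :
    Continuous fun s => ∫ t in a..b, f (t - s) * g t := by
  obtain ⟨M, hM⟩ := (isCompact_uIcc (a := a) (b := b)).exists_bound_of_continuousOn
    hg.continuousOn
  have hM0 : 0 ≤ M := (norm_nonneg _).trans (hM a left_mem_uIcc)
  refine continuous_of_uniform_approx_of_continuous fun u hu => ?_
  obtain ⟨δ, hδ, hδu⟩ := Metric.mem_uniformity_dist.1 hu
  obtain ⟨φ, hφ, hfφ, hfφδ⟩ := hf (δ / (M + 1)) (by positivity)
  refine ⟨fun s => ∫ t in a..b, φ (t - s) * g t, ?_, fun s => hδu ?_⟩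
  · exact continuous_parametric_intervalIntegral_of_continuous'
      ((hφ.comp (continuous_snd.sub continuous_fst)).mul (hg.comp continuous_snd)) a b
  have hsplit : ∫ t in a..b, f (t - s) * g t =
      (∫ t in a..b, (f (t - s) - φ (t - s)) * g t) + ∫ t in a..b, φ (t - s) * g t := by
    rw [← integral_add
      ((hfφ.comp_sub_right s).intervalIntegrable.mul_continuousOn hg.continuousOn)
      ((by fun_prop : Continuous fun t => φ (t - s) * g t).intervalIntegrable a b)]
    simp only [sub_mul, sub_add_cancel]
  have hbound := abs_intervalIntegral_comp_sub_mul_le hfφ (fun t ht => by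
    simpa only [Real.norm_eq_abs] using hM t ht) s
  rw [Real.dist_eq, hsplit, add_sub_cancel_right]
  calc _ ≤ M * (δ / (M + 1)) := hbound.trans (mul_le_mul_of_nonneg_left hfφδ hM0)
    _ < δ := by rw [mul_div_assoc', div_lt_iff₀ (by positivity)]; nlinarith

end TranslatedKernel

section LogKernel

variable {ε : ℝ}

theorem continuous_log_max_abs (hε : 0 < ε) : Continuous fun u : ℝ => log (max |u| ε) :=
  (continuous_abs.max continuous_const).log fun _ => (hε.trans_le (le_max_right _ _)).ne'

theorem log_abs_sub_log_max_abs_eq_indicator (ε : ℝ) :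
    (fun u : ℝ => log |u| - log (max |u| ε)) = (Icc (-ε) ε).indicator fun u => log u - log ε := by
  funext u
  by_cases hu : |u| ≤ ε
  · rw [indicator_of_mem (show u ∈ Icc (-ε) ε from abs_le.1 hu), max_eq_right hu, log_abs]
  · rw [indicator_of_notMem (show u ∉ Icc (-ε) ε from fun h => hu (abs_le.2 h)),
      max_eq_left (not_le.1 hu).le, sub_self]

theorem integrable_log_abs_sub_log_max_abs (ε : ℝ) :
    Integrable fun u : ℝ => log |u| - log (max |u| ε) := by
  rw [log_abs_sub_log_max_abs_eq_indicator, integrable_indicator_iff measurableSet_Icc]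
  exact ((intervalIntegrable_iff' (a := -ε) (b := ε)).1
    (intervalIntegrable_log'.sub intervalIntegrable_const)).mono_set Icc_subset_uIcc

theorem integral_abs_log_abs_sub_log_max_abs (hε : 0 < ε) :
    ∫ u : ℝ, |log |u| - log (max |u| ε)| = 2 * ε := by
  have hae : (fun u : ℝ => |log |u| - log (max |u| ε)|) =ᵐ[volume]
      (Icc (-ε) ε).indicator fun u => log ε - log u := by
    filter_upwards [Measure.ae_ne volume 0] with u hu0
    by_cases hu : |u| ≤ ε
    · rw [indicator_of_mem (show u ∈ Icc (-ε) ε from abs_le.1 hu), max_eq_right hu,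
        abs_of_nonpos (sub_nonpos.2 (log_le_log (abs_pos.2 hu0) hu)), neg_sub, log_abs]
    · rw [indicator_of_notMem (show u ∉ Icc (-ε) ε from fun h => hu (abs_le.2 h)),
        max_eq_left (not_le.1 hu).le, sub_self, abs_zero]
  rw [integral_congr_ae hae, MeasureTheory.integral_indicator measurableSet_Icc,
    integral_Icc_eq_integral_Ioc, ← integral_of_le (by linarith),
    integral_sub intervalIntegrable_const intervalIntegrable_log',
    intervalIntegral.integral_const, integral_log, log_neg_eq_log, smul_eq_mul]
  ring

end LogKernel

/-- For a continuous density `g`, the weakly singular integral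
`∫_{-1}^{1} log|t - s| g(t) dt` depends continuously on the source
parameter `s`. -/
theorem continuous_log_kernel_integral (g : ℝ → ℝ) (hg : Continuous g) :
    Continuous fun s : ℝ => ∫ t in (-1:ℝ)..1, Real.log |t - s| * g t := by
  refine continuous_intervalIntegral_comp_sub_mul (f := fun u => log |u|) hg fun δ hδ => ?_
  refine ⟨fun u => log (max |u| (δ / 2)), continuous_log_max_abs (half_pos hδ),
    integrable_log_abs_sub_log_max_abs _, ?_⟩
  rw [integral_abs_log_abs_sub_log_max_abs (half_pos hδ)]
  linarith
end

section
/- Let s ∈ [−1,1], let a : ℕ → ℝ be coefficients such that Σ_{i=0}^{∞} |a_i| r^i < ∞ for some r > 2, and let g(t) = Σ_{i=0}^{∞} a_i (t − s)^i (which converges for all t ∈ [−1,1]). Let t_1, …, t_n ∈ [−1,1] be nodes with t_k ≠ s for all k and w_1, …, w_n ∈ ℝ weights. Define E^i(s) = | ∫_{−1}^{1} log|t − s| (t − s)^i dt − Σ_{k=1}^{n} w_k log|t_k − s| (t_k − s)^i |. Then the series Σ_{i=0}^{∞} |a_i| E^i(s) converges and | ∫_{−1}^{1} log|t − s| g(t)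 dt − Σ_{k=1}^{n} w_k log|t_k − s| g(t_k) | ≤ Σ_{i=0}^{∞} |a_i| E^i(s). -/
/-!
Both the integral and the quadrature rule are linear in the density, so the quadrature error
`quadError` is a linear functional. On `[-1, 1]` we have `|t - s| ≤ 2`, so `∑ |a i| 2 ^ i < ∞`
makes the Taylor series of `g` converge dominatedly against the integrable kernel `log |t - s|`;
hence `quadError g = ∑ a i * quadError ((· - s) ^ i)`, and the triangle inequality for series
gives the bound.
-/

open Real MeasureTheory Set

noncomputable section

def quadError (K : ℝ → ℝ) (a b : ℝ) {n : ℕ} (t w : Fin n → ℝ) (f : ℝ → ℝ) : ℝ :=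
  (∫ τ in a..b, K τ * f τ) - ∑ k : Fin n, w k * (K (t k) * f (t k))

section QuadError

variable {K : ℝ → ℝ} {a b : ℝ} {n : ℕ} {t w : Fin n → ℝ}

theorem quadError_const_mul (c : ℝ) (f : ℝ → ℝ) :
    quadError K a b t w (fun τ => c * f τ) = c * quadError K a b t w f := by
  simp only [quadError, mul_left_comm _ c, intervalIntegral.integral_const_mul, ← Finset.mul_sum,
    mul_sub]

theorem abs_quadError_le (hK : IntervalIntegrable K volume a b) (ht : ∀ k, t k ∈ uIcc a b)
    {f : ℝ → ℝ} {B : ℝ} (hf : ∀ τ ∈ uIcc a b, |f τ| ≤ B) :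
    |quadError K a b t w f| ≤ B * (|(∫ τ in a..b, |K τ|)| + ∑ k : Fin n, |w k| * |K (t k)|) := by
  have hB : 0 ≤ B := (abs_nonneg _).trans (hf a left_mem_uIcc)
  have hint : |∫ τ in a..b, K τ * f τ| ≤ B * |(∫ τ in a..b, |K τ|)| := by
    have h := intervalIntegral.norm_integral_le_abs_of_norm_le (f := fun τ => K τ * f τ)
      (g := fun τ => |K τ| * B) (μ := volume) ?_ (hK.abs.mul_const B)
    · rwa [intervalIntegral.integral_mul_const, abs_mul, abs_of_nonneg hB, mul_comm] at h
    refine ae_restrict_of_forall_mem measurableSet_uIoc fun τ hτ => ?_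
    rw [norm_mul, norm_eq_abs, norm_eq_abs]
    exact mul_le_mul_of_nonneg_left (hf τ (uIoc_subset_uIcc hτ)) (abs_nonneg _)
  have hsum : |∑ k : Fin n, w k * (K (t k) * f (t k))| ≤ B * ∑ k : Fin n, |w k| * |K (t k)| := by
    rw [Finset.mul_sum]
    refine (Finset.abs_sum_le_sum_abs _ _).trans (Finset.sum_le_sum fun k _ => ?_)
    rw [abs_mul, abs_mul, mul_comm B, mul_assoc]
    gcongr
    exact hf _ (ht k)
  calc |quadError K a b t w f|
      ≤ |∫ τ in a..b, K τ * f τ| + |∑ k : Fin n, w k * (K (t k) * f (t k))| := abs_sub _ _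
    _ ≤ _ := by rw [mul_add]; exact add_le_add hint hsum

theorem hasSum_quadError (hK : IntervalIntegrable K volume a b) (ht : ∀ k, t k ∈ uIcc a b)
    {F : ℕ → ℝ → ℝ} {f : ℝ → ℝ} {bound : ℕ → ℝ} (hF : ∀ i, Continuous (F i))
    (hFb : ∀ i, ∀ τ ∈ uIcc a b, |F i τ| ≤ bound i) (hbound : Summable bound)
    (hf : ∀ τ ∈ uIcc a b, f τ = ∑' i, F i τ) :
    HasSum (fun i => quadError K a b t w (F i)) (quadError K a b t w f) := by
  have hFf : ∀ τ ∈ uIcc a b, HasSum (fun i => F i τ) (f τ) := fun τ hτ =>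
    hf τ hτ ▸ (Summable.of_norm_bounded hbound fun i => hFb i τ hτ).hasSum
  have hint : HasSum (fun i => ∫ τ in a..b, K τ * F i τ) (∫ τ in a..b, K τ * f τ) := by
    refine intervalIntegral.hasSum_integral_of_dominated_convergence
      (fun i τ => bound i * |K τ|) (fun i => ?_) (fun i => ?_) ?_ ?_ ?_
    · exact hK.def'.aestronglyMeasurable.mul (hF i).aestronglyMeasurable
    · refine .of_forall fun τ hτ => ?_
      rw [norm_mul, norm_eq_abs, norm_eq_abs, mul_comm]
      exact mul_le_mul_of_nonneg_right (hFb i τ (uIoc_subset_uIcc hτ)) (abs_nonneg _)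
    · exact .of_forall fun τ _ => hbound.mul_right _
    · simp_rw [tsum_mul_right]
      exact hK.abs.const_mul _
    · exact .of_forall fun τ hτ => (hFf τ (uIoc_subset_uIcc hτ)).mul_left (K τ)
  have hnodes : HasSum (fun i => ∑ k : Fin n, w k * (K (t k) * F i (t k)))
      (∑ k : Fin n, w k * (K (t k) * f (t k))) :=
    hasSum_sum fun k _ => ((hFf (t k) (ht k)).mul_left (K (t k))).mul_left (w k)
  exact hint.sub hnodes

end QuadError

theorem intervalIntegrable_log_abs_sub (s a b : ℝ) :
    IntervalIntegrable (fun τ => log |τ - s|) volume a b := by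
  simpa only [log_abs, sub_add_cancel] using
    (intervalIntegral.intervalIntegrable_log' (a := a - s) (b := b - s)).comp_sub_right s

theorem quadrature_error_taylor_bound_general
    (s : ℝ) (hs : s ∈ Set.Icc (-1:ℝ) 1)
    (a : ℕ → ℝ) (r : ℝ) (hr : 2 < r) (ha : Summable fun i : ℕ => |a i| * r ^ i)
    (g : ℝ → ℝ) (hg : ∀ t : ℝ, g t = ∑' i : ℕ, a i * (t - s) ^ i)
    (n : ℕ) (t : Fin n → ℝ) (ht : ∀ k, t k ∈ Set.Icc (-1:ℝ) 1)
    (w : Fin n → ℝ)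
    (E : ℕ → ℝ)
    (hE : ∀ i : ℕ, E i =
      |(∫ τ in (-1:ℝ)..1, Real.log |τ - s| * (τ - s) ^ i)
        - ∑ k : Fin n, w k * (Real.log |t k - s| * (t k - s) ^ i)|) :
    Summable (fun i : ℕ => |a i| * E i) ∧
      |(∫ τ in (-1:ℝ)..1, Real.log |τ - s| * g τ)
          - ∑ k : Fin n, w k * (Real.log |t k - s| * g (t k))|
        ≤ ∑' i : ℕ, |a i| * E i := by
  set K : ℝ → ℝ := fun τ => log |τ - s|
  set M : ℕ → ℝ := fun i => quadError K (-1) 1 t w fun τ => (τ - s) ^ i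
  replace hE : ∀ i, E i = |M i| := hE
  have hK := intervalIntegrable_log_abs_sub s (-1) 1
  have hI : uIcc (-1 : ℝ) 1 = Icc (-1) 1 := uIcc_of_le (by norm_num)
  have ht' : ∀ k, t k ∈ uIcc (-1 : ℝ) 1 := fun k => hI ▸ ht k
  have hpow (i : ℕ) : ∀ τ ∈ uIcc (-1 : ℝ) 1, |(τ - s) ^ i| ≤ 2 ^ i := fun τ hτ => by
    rw [abs_pow, ← dist_eq]
    gcongr
    exact (dist_le_of_mem_Icc (hI ▸ hτ) hs).trans_eq (by norm_num)
  have ha2 : Summable fun i => |a i| * 2 ^ i :=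
    ha.of_nonneg_of_le (fun i => by positivity) fun i => by gcongr
  have hmoments : HasSum (fun i => a i * M i) (quadError K (-1) 1 t w g) := by
    simpa only [quadError_const_mul] using
      hasSum_quadError hK ht' (F := fun i τ => a i * (τ - s) ^ i) (fun i => by fun_prop)
        (fun i τ hτ => by rw [abs_mul]; gcongr; exact hpow i τ hτ) ha2 fun τ _ => hg τ
  have hsummable : Summable fun i => |a i| * E i := by
    set C := |(∫ τ in (-1 : ℝ)..1, |K τ|)| + ∑ k, |w k| * |K (t k)|
    refine (ha2.mul_right C).of_nonneg_of_le (fun i => by rw [hE]; positivity) fun i => ?_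
    rw [hE, mul_assoc]
    gcongr
    exact abs_quadError_le hK ht' (hpow i)
  refine ⟨hsummable, ?_⟩
  calc |quadError K (-1) 1 t w g| = ‖∑' i, a i * M i‖ := by rw [hmoments.tsum_eq, norm_eq_abs]
    _ ≤ ∑' i, ‖a i * M i‖ :=
      norm_tsum_le_tsum_norm (by simpa only [norm_mul, norm_eq_abs, hE] using hsummable)
    _ = ∑' i, |a i| * E i := by simp only [norm_mul, norm_eq_abs, hE]

/-- Taylor-expansion bound for the quadrature error of the logarithmic kernel:
if the density `g` is given by a power series around the source point `s`
whose coefficients satisfy `∑ |a_i| r^i < ∞` for some `r > 2`, then the total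
quadrature error is bounded by the absolutely convergent series
`∑ |a_i| E^i(s)` of weighted moment errors. -/
theorem quadrature_error_taylor_bound
    (s : ℝ) (hs : s ∈ Set.Icc (-1:ℝ) 1)
    (a : ℕ → ℝ) (r : ℝ) (hr : 2 < r) (ha : Summable fun i : ℕ => |a i| * r ^ i)
    (g : ℝ → ℝ) (hg : ∀ t : ℝ, g t = ∑' i : ℕ, a i * (t - s) ^ i)
    (n : ℕ) (t : Fin n → ℝ) (ht : ∀ k, t k ∈ Set.Icc (-1:ℝ) 1)
    (hts : ∀ k, t k ≠ s) (w : Fin n → ℝ)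
    (E : ℕ → ℝ)
    (hE : ∀ i : ℕ, E i =
      |(∫ τ in (-1:ℝ)..1, Real.log |τ - s| * (τ - s) ^ i)
        - ∑ k : Fin n, w k * (Real.log |t k - s| * (t k - s) ^ i)|) :
    Summable (fun i : ℕ => |a i| * E i) ∧
      |(∫ τ in (-1:ℝ)..1, Real.log |τ - s| * g τ)
          - ∑ k : Fin n, w k * (Real.log |t k - s| * g (t k))|
        ≤ ∑' i : ℕ, |a i| * E i :=
  quadrature_error_taylor_bound_general s hs a r hr ha g hg n t ht w E hE
end
end
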